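/- arXiv:math/0405008 — 4 statements merged into one kernel-verified Lean document; each statement's English description precedes it below -/
import Mathlib

section
/- Let N = ker φ and N′ = [N,N]. The restriction of D to N is a surjective group homomorphism N → Z_1(G) whose kernel is exactly N′, and it satisfies D(w a w^{-1}) = φ(w)·D(a) for all w ∈ F_d and a ∈ N. Hence D induces a G-equivariant group isomorphism from N/N′ (with the G-action induced by conjugation) onto Z_1(G), the first homology group of the Cayley graph of G. -/
/-- `C1 G d` : edge chains of the right Cayley graph of `G` w.r.t. `d` distinguished
elements; `Finsupp.single (g, i) 1` is the edge from `g` to `g * x i`. -/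
abbrev C1 (G : Type*) (d : ℕ) : Type _ := (G × Fin d) →₀ ℤ

/-- `C0 G` : vertex chains, the free abelian group on `G`. -/
abbrev C0 (G : Type*) : Type _ := G →₀ ℤ

/-- The left action of `g : G` on edge chains, `g • δ_{(h,i)} = δ_{(g*h,i)}`. -/
noncomputable def shift {G : Type*} [Group G] (d : ℕ) (g : G) : C1 G d →+ C1 G d :=
  Finsupp.mapDomain.addMonoidHom fun p => (g * p.1, p.2)

/-- The boundary map `∂ : C1 → C0`, `∂ δ_{(g,i)} = δ_{g * x i} - δ_g`. -/
noncomputable def bd {G : Type*} [Group G] (d : ℕ) (x : Fin d → G) : C1 G d →+ C0 G :=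
  Finsupp.liftAddHom fun p =>
    zmultiplesHom (C0 G) (Finsupp.single (p.1 * x p.2) 1 - Finsupp.single p.1 1)

/-!
`D` is a crossed homomorphism over `φ`, so on `N = ker φ` it is a homomorphism into an abelian
group, killing `[N, N]`, and `∂ (D w) = δ_{φ w} - δ_1`. Fix a section `s` of `φ` with `s 1 = 1`.
A word `v` read from the vertex `g` closes up to the loop `s g · v · s (g φ v)⁻¹ ∈ N`. The loop
of a single edge is mapped by `D` to that edge plus a term depending only on its boundary, so
every cycle is a combination of edge loops. Conversely, sending each edge to the class of its
loop in the abelianization of `N` is a homomorphism on `C₁(G)` that undoes `D` on `N`, so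
`D a = 0` forces `a ∈ [N, N]`.
-/

section CayleyGraph

open FreeGroup

variable {d : ℕ} {G : Type*} [Group G]

section Chains

@[simp]
lemma shift_single (g h : G) (i : Fin d) (n : ℤ) :
    shift d g (Finsupp.single (h, i) n) = Finsupp.single (g * h, i) n := by
  simp [shift, Finsupp.mapDomain.addMonoidHom, Finsupp.mapDomain_single]

lemma shift_one : shift d (1 : G) = AddMonoidHom.id (C1 G d) :=
  Finsupp.addHom_ext fun ⟨h, i⟩ n => by simp

@[simp]
lemma shift_one_apply (γ : C1 G d) : shift d (1 : G) γ = γ := by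
  rw [shift_one, AddMonoidHom.id_apply]

lemma shift_mul (g h : G) : shift d (g * h) = (shift d g).comp (shift d h) :=
  Finsupp.addHom_ext fun ⟨k, i⟩ n => by simp [mul_assoc]

lemma shift_mul_apply (g h : G) (γ : C1 G d) :
    shift d (g * h) γ = shift d g (shift d h γ) := by
  rw [shift_mul, AddMonoidHom.comp_apply]

noncomputable def shift₀ (g : G) : C0 G →+ C0 G :=
  Finsupp.mapDomain.addMonoidHom (g * ·)

@[simp]
lemma shift₀_single (g h : G) (n : ℤ) :
    shift₀ g (Finsupp.single h n) = Finsupp.single (g * h) n := by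
  simp [shift₀, Finsupp.mapDomain.addMonoidHom, Finsupp.mapDomain_single]

@[simp]
lemma bd_single (x : Fin d → G) (p : G × Fin d) (n : ℤ) :
    bd d x (Finsupp.single p n) =
      n • (Finsupp.single (p.1 * x p.2) 1 - Finsupp.single p.1 1) := by
  simp [bd]

lemma bd_comp_shift (x : Fin d → G) (g : G) :
    (bd d x).comp (shift d g) = (shift₀ g).comp (bd d x) :=
  Finsupp.addHom_ext fun ⟨h, i⟩ n => by simp [mul_assoc]

lemma bd_shift (x : Fin d → G) (g : G) (γ : C1 G d) :
    bd d x (shift d g γ) = shift₀ g (bd d x γ) :=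
  DFunLike.congr_fun (bd_comp_shift x g) γ

end Chains

lemma Subgroup.mem_commutator_self_iff {F : Type*} [Group F] (H : Subgroup F) {a : F}
    (ha : a ∈ H) : a ∈ ⁅H, H⁆ ↔ (⟨a, ha⟩ : H) ∈ _root_.commutator H := by
  rw [← H.map_subtype_commutator, ← Subgroup.mem_map_iff_mem H.subtype_injective]
  rfl

section CrossedHom

variable {F : Type*} [Group F] {φ : F →* G} {D : F → C1 G d}

def IsCrossedHom (φ : F →* G) (D : F → C1 G d) : Prop :=
  ∀ u v, D (u * v) = D u + shift d (φ u) (D v)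

namespace IsCrossedHom

lemma map_one (hD : IsCrossedHom φ D) : D 1 = 0 := by
  simpa using hD 1 1

lemma map_inv (hD : IsCrossedHom φ D) (u : F) : D u⁻¹ = -shift d (φ u)⁻¹ (D u) := by
  have h := hD u⁻¹ u
  rw [inv_mul_cancel, hD.map_one, _root_.map_inv] at h
  exact eq_neg_of_add_eq_zero_left h.symm

lemma map_mul_of_mem_ker (hD : IsCrossedHom φ D) {a : F} (ha : a ∈ φ.ker) (b : F) :
    D (a * b) = D a + D b := by
  rw [hD, ha, shift_one_apply]

lemma map_conj (hD : IsCrossedHom φ D) (w : F) {a : F} (ha : a ∈ φ.ker) :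
    D (w * a * w⁻¹) = shift d (φ w) (D a) := by
  rw [hD, hD, hD.map_inv, _root_.map_mul, ha, mul_one, map_neg, ← shift_mul_apply,
    mul_inv_cancel, shift_one_apply]
  abel

noncomputable def restrictKer (hD : IsCrossedHom φ D) : φ.ker →* Multiplicative (C1 G d) where
  toFun a := .ofAdd (D a)
  map_one' := by simp [hD.map_one]
  map_mul' a b := by simp [hD.map_mul_of_mem_ker a.2]

lemma eq_zero_of_mem_commutator (hD : IsCrossedHom φ D) {a : F}
    (ha : a ∈ ⁅φ.ker, φ.ker⁆) : D a = 0 :=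
  Multiplicative.ofAdd.injective <| Abelianization.commutator_subset_ker hD.restrictKer
    ((φ.ker.mem_commutator_self_iff (φ.ker.commutator_le_self ha)).1 ha)

end IsCrossedHom

end CrossedHom

section Loops

variable {F : Type*} [Group F] {φ : F →* G} (hφ : Function.Surjective φ)

open scoped Classical in
noncomputable def liftSection (g : G) : F :=
  if g = 1 then 1 else Function.surjInv hφ g

@[simp]
lemma apply_liftSection (g : G) : φ (liftSection hφ g) = g := by
  unfold liftSection
  split_ifs with hg
  · rw [hg, _root_.map_one]
  · exact Function.surjInv_eq hφ g

@[simp]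
lemma liftSection_one : liftSection hφ 1 = 1 := if_pos rfl

/-- The path spelled by `v` from the vertex `g` of the Cayley graph, closed up to a loop at `1`
by the paths spelled by `liftSection hφ` to its two ends. -/
noncomputable def cayleyLoop (g : G) (v : F) : φ.ker :=
  ⟨liftSection hφ g * v * (liftSection hφ (g * φ v))⁻¹, by simp⟩

lemma cayleyLoop_mul (g : G) (u v : F) :
    cayleyLoop hφ g (u * v) = cayleyLoop hφ g u * cayleyLoop hφ (g * φ u) v :=
  Subtype.ext <| by simp [cayleyLoop, mul_assoc]

lemma cayleyLoop_one (g : G) : cayleyLoop hφ g 1 = 1 :=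
  Subtype.ext <| by simp [cayleyLoop]

lemma cayleyLoop_inv (g : G) (v : F) :
    cayleyLoop hφ g v⁻¹ = (cayleyLoop hφ (g * φ v⁻¹) v)⁻¹ :=
  eq_inv_of_mul_eq_one_left <| by rw [← cayleyLoop_mul, inv_mul_cancel, cayleyLoop_one]

lemma cayleyLoop_one_of_mem_ker {a : F} (ha : a ∈ φ.ker) : cayleyLoop hφ 1 a = ⟨a, ha⟩ :=
  Subtype.ext <| by simp [cayleyLoop, MonoidHom.mem_ker.1 ha]

lemma IsCrossedHom.map_cayleyLoop {D : F → C1 G d} (hD : IsCrossedHom φ D) (g : G) (v : F) :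
    D (cayleyLoop hφ g v) =
      D (liftSection hφ g) + shift d g (D v) - D (liftSection hφ (g * φ v)) := by
  rw [cayleyLoop, hD, hD, hD.map_inv, _root_.map_mul, apply_liftSection, apply_liftSection,
    map_neg, ← shift_mul_apply, mul_inv_cancel, shift_one_apply, sub_eq_add_neg]

end Loops

section Free

variable {x : Fin d → G} {D : FreeGroup (Fin d) → C1 G d}

lemma IsCrossedHom.bd_apply (hD : IsCrossedHom (FreeGroup.lift x) D)
    (hD1 : ∀ i, D (of i) = Finsupp.single ((1 : G), i) 1) (w : FreeGroup (Fin d)) :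
    bd d x (D w) = Finsupp.single (FreeGroup.lift x w) 1 - Finsupp.single 1 1 := by
  induction w using FreeGroup.induction_on with
  | C1 => simp [hD.map_one]
  | of i => simp [hD1]
  | inv_of i ih =>
    rw [hD.map_inv, map_neg, bd_shift, ih, map_sub, shift₀_single, shift₀_single, _root_.map_inv]
    simp
  | mul u v ihu ihv =>
    rw [hD, map_add, bd_shift, ihu, ihv, map_sub, shift₀_single, shift₀_single, _root_.map_mul,
      mul_one]
    abel

lemma IsCrossedHom.bd_eq_zero_of_mem_ker (hD : IsCrossedHom (FreeGroup.lift x) D)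
    (hD1 : ∀ i, D (of i) = Finsupp.single ((1 : G), i) 1) {a : FreeGroup (Fin d)}
    (ha : a ∈ (FreeGroup.lift x).ker) : bd d x (D a) = 0 := by
  rw [hD.bd_apply hD1, MonoidHom.mem_ker.1 ha, sub_self]

lemma IsCrossedHom.liftAddHom_cayleyLoop (hD : IsCrossedHom (FreeGroup.lift x) D)
    (hgen : Function.Surjective (FreeGroup.lift x))
    (hD1 : ∀ i, D (of i) = Finsupp.single ((1 : G), i) 1) :
    (Finsupp.liftAddHom fun p => zmultiplesHom (C1 G d) (D (cayleyLoop hgen p.1 (of p.2)))) =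
      AddMonoidHom.id (C1 G d) -
        (Finsupp.liftAddHom fun g => zmultiplesHom (C1 G d) (D (liftSection hgen g))).comp
          (bd d x) :=
  Finsupp.addHom_ext fun ⟨g, i⟩ n => by
    simp only [Finsupp.liftAddHom_apply_single, zmultiplesHom_apply, hD.map_cayleyLoop, hD1,
      AddMonoidHom.sub_apply, AddMonoidHom.id_apply, AddMonoidHom.comp_apply, bd_single,
      map_zsmul, map_sub, shift_single, FreeGroup.lift_apply_of, mul_one, one_smul]
    rw [← Finsupp.smul_single_one (g, i) n]
    module

lemma IsCrossedHom.exists_mem_ker_eq (hD : IsCrossedHom (FreeGroup.lift x) D)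
    (hgen : Function.Surjective (FreeGroup.lift x))
    (hD1 : ∀ i, D (of i) = Finsupp.single ((1 : G), i) 1) {γ : C1 G d} (hγ : bd d x γ = 0) :
    ∃ a ∈ (FreeGroup.lift x).ker, D a = γ := by
  have hsum : γ = γ.sum fun p n => n • D (cayleyLoop hgen p.1 (of p.2)) := by
    have h := DFunLike.congr_fun (hD.liftAddHom_cayleyLoop hgen hD1) γ
    simp only [Finsupp.liftAddHom_apply, AddMonoidHom.sub_apply,
      AddMonoidHom.id_apply, AddMonoidHom.comp_apply, hγ, map_zero, sub_zero] at h
    exact h.symm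
  have hmem : γ ∈ Subgroup.toAddSubgroup' hD.restrictKer.range := by
    rw [hsum]
    exact AddSubmonoidClass.finsuppSum_mem _ _ _ fun p _ =>
      zsmul_mem ((Subgroup.mem_toAddSubgroup' _ _).2 (MonoidHom.mem_range.2 ⟨_, rfl⟩)) _
  obtain ⟨a, ha⟩ := hmem
  exact ⟨a, a.2, congrArg Multiplicative.toAdd ha⟩

noncomputable def loopClass (hgen : Function.Surjective (FreeGroup.lift x)) :
    C1 G d →+ Additive (Abelianization (FreeGroup.lift x).ker) :=
  Finsupp.liftAddHom fun p =>
    zmultiplesHom _ (.ofMul (Abelianization.of (cayleyLoop hgen p.1 (of p.2))))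

lemma loopClass_single (hgen : Function.Surjective (FreeGroup.lift x)) (p : G × Fin d) :
    loopClass hgen (Finsupp.single p 1) =
      .ofMul (Abelianization.of (cayleyLoop hgen p.1 (of p.2))) := by
  simp [loopClass]

lemma IsCrossedHom.loopClass_shift (hD : IsCrossedHom (FreeGroup.lift x) D)
    (hgen : Function.Surjective (FreeGroup.lift x))
    (hD1 : ∀ i, D (of i) = Finsupp.single ((1 : G), i) 1) (v : FreeGroup (Fin d)) (g : G) :
    loopClass hgen (shift d g (D v)) = .ofMul (Abelianization.of (cayleyLoop hgen g v)) := by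
  induction v using FreeGroup.induction_on generalizing g with
  | C1 => simp [hD.map_one, cayleyLoop_one]
  | of i => rw [hD1, shift_single, mul_one, loopClass_single]
  | inv_of i ih =>
    rw [hD.map_inv, map_neg, map_neg, ← shift_mul_apply, ih, cayleyLoop_inv, _root_.map_inv,
      ofMul_inv, ← _root_.map_inv (FreeGroup.lift x)]
  | mul u v ihu ihv =>
    rw [hD, map_add, map_add, ← shift_mul_apply, ihu, ihv, cayleyLoop_mul, _root_.map_mul,
      ofMul_mul]

lemma IsCrossedHom.mem_commutator_of_eq_zero (hD : IsCrossedHom (FreeGroup.lift x) D)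
    (hgen : Function.Surjective (FreeGroup.lift x))
    (hD1 : ∀ i, D (of i) = Finsupp.single ((1 : G), i) 1) {a : FreeGroup (Fin d)}
    (ha : a ∈ (FreeGroup.lift x).ker) (h0 : D a = 0) :
    a ∈ ⁅(FreeGroup.lift x).ker, (FreeGroup.lift x).ker⁆ := by
  have h := hD.loopClass_shift hgen hD1 a 1
  rw [h0, map_zero, map_zero, cayleyLoop_one_of_mem_ker hgen ha, eq_comm, ofMul_eq_zero,
    ← MonoidHom.mem_ker, Abelianization.ker_of] at h
  exact ((FreeGroup.lift x).ker.mem_commutator_self_iff ha).2 h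

end Free

end CayleyGraph

theorem D_iso_homology_general {d : ℕ} {G : Type*} [Group G] (x : Fin d → G)
    (hgen : Function.Surjective (FreeGroup.lift x))
    (D : FreeGroup (Fin d) → C1 G d)
    (hD1 : ∀ i : Fin d, D (FreeGroup.of i) = Finsupp.single ((1 : G), i) 1)
    (hDmul : ∀ u v : FreeGroup (Fin d),
      D (u * v) = D u + shift d (FreeGroup.lift x u) (D v)) :
    (∀ a ∈ (FreeGroup.lift x).ker, D a ∈ (bd d x).ker) ∧
    (∀ a b : FreeGroup (Fin d), a ∈ (FreeGroup.lift x).ker → b ∈ (FreeGroup.lift x).ker →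
      D (a * b) = D a + D b) ∧
    (∀ γ : C1 G d, γ ∈ (bd d x).ker → ∃ a ∈ (FreeGroup.lift x).ker, D a = γ) ∧
    (∀ a ∈ (FreeGroup.lift x).ker,
      (D a = 0 ↔ a ∈ (⁅(FreeGroup.lift x).ker, (FreeGroup.lift x).ker⁆ :
        Subgroup (FreeGroup (Fin d))))) ∧
    (∀ (w : FreeGroup (Fin d)), ∀ a ∈ (FreeGroup.lift x).ker,
      D (w * a * w⁻¹) = shift d (FreeGroup.lift x w) (D a)) := by
  have hD : IsCrossedHom (FreeGroup.lift x) D := hDmul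
  exact ⟨fun a ha => hD.bd_eq_zero_of_mem_ker hD1 ha,
    fun a b ha _ => hD.map_mul_of_mem_ker ha b,
    fun γ hγ => hD.exists_mem_ker_eq hgen hD1 hγ,
    fun a ha => ⟨hD.mem_commutator_of_eq_zero hgen hD1 ha, hD.eq_zero_of_mem_commutator⟩,
    fun w a ha => hD.map_conj w ha⟩

/-- Let `N = ker φ` and `N' = [N, N]`.  The restriction of `D` to `N` is a group
homomorphism onto the cycle group `Z_1 = ker ∂` with kernel exactly `N'`, and
`D (w a w⁻¹) = φ(w) · D a` for `w ∈ F_d`, `a ∈ N`; hence `D` induces a `G`-equivariant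
isomorphism `N/N' ≃ Z_1(G)`, the first homology group of the Cayley graph of `G`. -/
theorem D_iso_homology {d : ℕ} (hd : 1 ≤ d) {G : Type*} [Group G] (x : Fin d → G)
    (hgen : Function.Surjective (FreeGroup.lift x))
    (D : FreeGroup (Fin d) → C1 G d)
    (hD1 : ∀ i : Fin d, D (FreeGroup.of i) = Finsupp.single ((1 : G), i) 1)
    (hDmul : ∀ u v : FreeGroup (Fin d),
      D (u * v) = D u + shift d (FreeGroup.lift x u) (D v)) :
    (∀ a ∈ (FreeGroup.lift x).ker, D a ∈ (bd d x).ker) ∧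
    (∀ a b : FreeGroup (Fin d), a ∈ (FreeGroup.lift x).ker → b ∈ (FreeGroup.lift x).ker →
      D (a * b) = D a + D b) ∧
    (∀ γ : C1 G d, γ ∈ (bd d x).ker → ∃ a ∈ (FreeGroup.lift x).ker, D a = γ) ∧
    (∀ a ∈ (FreeGroup.lift x).ker,
      (D a = 0 ↔ a ∈ (⁅(FreeGroup.lift x).ker, (FreeGroup.lift x).ker⁆ :
        Subgroup (FreeGroup (Fin d))))) ∧
    (∀ (w : FreeGroup (Fin d)), ∀ a ∈ (FreeGroup.lift x).ker,
      D (w * a * w⁻¹) = shift d (FreeGroup.lift x w) (D a)) :=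
  D_iso_homology_general x hgen D hD1 hDmul
end

section
/- With G = ℤ^d and φ: F_d → ℤ^d the abelianization, the map D induces a ℤ^d-equivariant group isomorphism from F_d′/F_d″ (where F_d′ is the commutator subgroup and F_d″ its commutator subgroup, with the ℤ^d-action induced by conjugation) onto Z_1(ℤ^d) = H_1(E^d), which sends, for each m ∈ ℤ^d and 1 ≤ i < j ≤ d, the class of the element X^m [X_i, X_j] X^{−m} (where X^m = X_1^{m_1} X_2^{m_2} ⋯ X_d^{m_d}) to the plaquette p(m,i,j). In particular the free metabelian group Met(d) = F_d/F_d″ is an extension of ℤ^d by the homology group H_1(E^d) of the lattice. -/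
/-- The lattice `ℤ^d`. -/
abbrev Zd (d : ℕ) : Type := Fin d → ℤ

/-- Edge chains of the grid complex `E^d` (Cayley graph of `ℤ^d`):
`Finsupp.single (m, i) 1` is the edge from `m` to `m + e i`. -/
abbrev C1Z (d : ℕ) : Type := (Zd d × Fin d) →₀ ℤ

/-- Vertex chains: the free abelian group on `ℤ^d`. -/
abbrev C0Z (d : ℕ) : Type := Zd d →₀ ℤ

/-- Translation action of `v ∈ ℤ^d` on edge chains: `v • δ_{(m,i)} = δ_{(m+v,i)}`. -/
noncomputable def shiftZ (d : ℕ) (v : Zd d) : C1Z d →+ C1Z d :=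
  Finsupp.mapDomain.addMonoidHom fun p => (v + p.1, p.2)

/-- The boundary map `∂ δ_{(m,i)} = δ_{m + e i} - δ_m`; its kernel is the cycle group
`Z_1(ℤ^d) = H_1(E^d)`. -/
noncomputable def bdZ (d : ℕ) : C1Z d →+ C0Z d :=
  Finsupp.liftAddHom fun p =>
    zmultiplesHom (C0Z d)
      (Finsupp.single (p.1 + Pi.single p.2 1) 1 - Finsupp.single p.1 1)

/-- The abelianization homomorphism `φ : F_d → ℤ^d`. -/
def phiZ (d : ℕ) : FreeGroup (Fin d) →* Multiplicative (Zd d) :=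
  FreeGroup.lift fun i => Multiplicative.ofAdd (Pi.single i 1)

/-- The plaquette `p(m,i,j) = δ_{(m,i)} + δ_{(m+e_i,j)} - δ_{(m+e_j,i)} - δ_{(m,j)}`. -/
noncomputable def plaq (d : ℕ) (m : Zd d) (i j : Fin d) : C1Z d :=
  Finsupp.single (m, i) 1 + Finsupp.single (m + Pi.single i 1, j) 1
    - Finsupp.single (m + Pi.single j 1, i) 1 - Finsupp.single (m, j) 1

/-- `X^m = X_1^{m_1} X_2^{m_2} ⋯ X_d^{m_d}` in the free group. -/
def Xm (d : ℕ) (m : Zd d) : FreeGroup (Fin d) :=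
  ((List.finRange d).map fun i => FreeGroup.of i ^ m i).prod

open scoped commutatorElement

/-!
`D` is a crossed homomorphism for the translation action, so on `F' = ker φ` it is a
homomorphism to an abelian group and hence kills `F''`; by induction `∂ (D u) = δ_{φ u} - δ_0`,
so `D (F')` consists of cycles. For surjectivity, the loop `X^m X_i X^{-(m+e_i)}` is sent to
`δ_{(m,i)}` minus a correction that factors through `∂`, hence vanishes on cycles. For
injectivity, sending `δ_{(m,i)}` to the class of that loop defines `c : C_1 → F'/F''`, and
`u ↦ c (D u) · X^{φ u}` is a homomorphism `F_d → F_d/F''` (conjugation by `X^v` acts on `c` as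
translation by `v` up to a term factoring through `∂`) which agrees with the quotient map on
generators; so `D a = 0` forces `a ∈ F''`.
-/

variable {d : ℕ}

@[simp]
lemma shiftZ_single (v : Zd d) (p : Zd d × Fin d) (k : ℤ) :
    shiftZ d v (Finsupp.single p k) = Finsupp.single (v + p.1, p.2) k := by
  simp [shiftZ]

@[simp]
lemma shiftZ_zero : shiftZ d 0 = AddMonoidHom.id (C1Z d) := by
  ext; simp

lemma shiftZ_add (v w : Zd d) : shiftZ d (v + w) = (shiftZ d v).comp (shiftZ d w) := by
  ext; simp [add_assoc]

lemma shiftZ_plaq (v m : Zd d) (i j : Fin d) :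
    shiftZ d v (plaq d m i j) = plaq d (v + m) i j := by
  simp [plaq, add_assoc]

lemma bdZ_single (p : Zd d × Fin d) :
    bdZ d (Finsupp.single p 1) =
      Finsupp.single (p.1 + Pi.single p.2 1) 1 - Finsupp.single p.1 1 := by
  simp [bdZ]

lemma bdZ_shiftZ (v : Zd d) (γ : C1Z d) :
    bdZ d (shiftZ d v γ) = Finsupp.mapDomain (v + ·) (bdZ d γ) := by
  suffices (bdZ d).comp (shiftZ d v) = (Finsupp.mapDomain.addMonoidHom (v + ·)).comp (bdZ d) from
    DFunLike.congr_fun this γ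
  ext p
  simp [bdZ_single, Finsupp.mapDomain_sub, add_assoc]

@[simp]
lemma phiZ_of (i : Fin d) : phiZ d (FreeGroup.of i) = Multiplicative.ofAdd (Pi.single i 1) := by
  simp [phiZ]

@[simp]
lemma phiZ_Xm (m : Zd d) : phiZ d (Xm d m) = Multiplicative.ofAdd m := by
  simp only [Xm, map_list_prod, List.map_map, Function.comp_def, map_zpow, phiZ_of,
    ← Fin.prod_univ_def, ← ofAdd_zsmul, ← ofAdd_sum]
  congr 1
  ext j
  simp [Finset.sum_apply, Pi.single_apply]

@[simp]
lemma Xm_zero : Xm d 0 = 1 := by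
  simp [Xm]

lemma phiZ_surjective : Function.Surjective (phiZ d) :=
  fun m => ⟨Xm d m.toAdd, by simp⟩

def latticeToAbelianization (d : ℕ) :
    Multiplicative (Zd d) →* Abelianization (FreeGroup (Fin d)) where
  toFun m := ∏ i, Abelianization.of (FreeGroup.of i) ^ m.toAdd i
  map_one' := by simp
  map_mul' m n := by simp [zpow_add, Finset.prod_mul_distrib]

lemma latticeToAbelianization_comp_phiZ :
    (latticeToAbelianization d).comp (phiZ d) = Abelianization.of := by
  refine FreeGroup.ext_hom _ _ fun i => ?_
  simp [latticeToAbelianization, Pi.single_apply]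

lemma commutator_eq_ker_phiZ : commutator (FreeGroup (Fin d)) = (phiZ d).ker := by
  refine le_antisymm (Abelianization.commutator_subset_ker _) fun a ha => ?_
  rw [← Abelianization.ker_of, MonoidHom.mem_ker, ← latticeToAbelianization_comp_phiZ,
    MonoidHom.comp_apply, ha, map_one]

section Cocycle

variable {G : Type*} [Group G] {φ : G →* Multiplicative (Zd d)} {D : G → C1Z d}
  (hD : ∀ u v, D (u * v) = D u + shiftZ d (φ u).toAdd (D v))
include hD

lemma cocycle_one : D 1 = 0 := by
  simpa using hD 1 1

lemma shiftZ_cocycle_inv (u : G) : shiftZ d (φ u).toAdd (D u⁻¹) = -D u := by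
  have h := hD u u⁻¹
  rw [mul_inv_cancel, cocycle_one hD] at h
  exact eq_neg_of_add_eq_zero_right h.symm

lemma cocycle_inv (u : G) : D u⁻¹ = -shiftZ d (-(φ u).toAdd) (D u) := by
  have h := congrArg (shiftZ d (-(φ u).toAdd)) (shiftZ_cocycle_inv hD u)
  rwa [← AddMonoidHom.comp_apply, ← shiftZ_add, neg_add_cancel, shiftZ_zero,
    AddMonoidHom.id_apply, map_neg] at h

lemma cocycle_mul_of_mem_ker {a : G} (ha : a ∈ φ.ker) (b : G) : D (a * b) = D a + D b := by
  simp [hD, MonoidHom.mem_ker.mp ha]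

lemma cocycle_conj (w : G) {a : G} (ha : a ∈ φ.ker) :
    D (w * a * w⁻¹) = shiftZ d (φ w).toAdd (D a) := by
  rw [hD, hD w a, map_mul, MonoidHom.mem_ker.mp ha, mul_one, shiftZ_cocycle_inv hD]
  abel

lemma bdZ_cocycle_mul {x y : G}
    (hx : bdZ d (D x) = Finsupp.single (φ x).toAdd 1 - Finsupp.single 0 1)
    (hy : bdZ d (D y) = Finsupp.single (φ y).toAdd 1 - Finsupp.single 0 1) :
    bdZ d (D (x * y)) = Finsupp.single (φ (x * y)).toAdd 1 - Finsupp.single 0 1 := by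
  rw [hD, map_add, bdZ_shiftZ, hx, hy, map_mul, toAdd_mul]
  simp [Finsupp.mapDomain_sub, Finsupp.mapDomain_single]

lemma bdZ_cocycle_inv {x : G}
    (hx : bdZ d (D x) = Finsupp.single (φ x).toAdd 1 - Finsupp.single 0 1) :
    bdZ d (D x⁻¹) = Finsupp.single (φ x⁻¹).toAdd 1 - Finsupp.single 0 1 := by
  have h := congrArg (bdZ d) (hD x⁻¹ x)
  rw [inv_mul_cancel, cocycle_one hD, map_add, bdZ_shiftZ, hx] at h
  simp only [Finsupp.mapDomain_sub, Finsupp.mapDomain_single, map_inv, toAdd_inv, add_zero,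
    neg_add_cancel, map_zero] at h ⊢
  linear_combination (norm := abel) -h

def cocycleKerHom : φ.ker →* Multiplicative (C1Z d) where
  toFun a := .ofAdd (D a)
  map_one' := by simp [cocycle_one hD]
  map_mul' a b := by simp [cocycle_mul_of_mem_ker hD a.2]

@[simp]
lemma cocycleKerHom_apply (a : φ.ker) : cocycleKerHom hD a = .ofAdd (D a) := rfl

lemma cocycle_eq_zero_of_mem_commutator_ker {a : G} (ha : a ∈ ⁅φ.ker, φ.ker⁆) :
    D a = 0 := by
  rw [← Subgroup.map_subtype_commutator] at ha
  obtain ⟨b, hb, rfl⟩ := ha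
  exact congrArg Multiplicative.toAdd (Abelianization.commutator_subset_ker (cocycleKerHom hD) hb)

end Cocycle

def edgeLoop (p : Zd d × Fin d) : FreeGroup (Fin d) :=
  Xm d p.1 * FreeGroup.of p.2 * (Xm d (p.1 + Pi.single p.2 1))⁻¹

lemma edgeLoop_mem_ker (p : Zd d × Fin d) : edgeLoop p ∈ (phiZ d).ker := by
  simp [edgeLoop, ← ofAdd_add]

noncomputable def standardPaths (D : FreeGroup (Fin d) → C1Z d) : C0Z d →+ C1Z d :=
  Finsupp.liftAddHom fun v => zmultiplesHom _ (D (Xm d v))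

@[simp]
lemma standardPaths_single (D : FreeGroup (Fin d) → C1Z d) (v : Zd d) :
    standardPaths D (Finsupp.single v 1) = D (Xm d v) := by
  simp [standardPaths]

abbrev Metabelianization (G : Type*) [Group G] : Type _ :=
  G ⧸ (⁅commutator G, commutator G⁆ : Subgroup G)

namespace Metabelianization

variable (G : Type*) [Group G]

def commutatorImage : Subgroup (Metabelianization G) :=
  (commutator G).map (QuotientGroup.mk' _)

instance : (commutatorImage G).Normal :=
  Subgroup.Normal.map inferInstance _ (QuotientGroup.mk'_surjective _)

instance : IsMulCommutative (commutatorImage G) := by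
  refine IsMulCommutative.of_setLike_mul_comm ?_
  rintro _ ⟨a, ha, rfl⟩ _ ⟨b, hb, rfl⟩
  rw [← commutatorElement_eq_one_iff_mul_comm, ← map_commutatorElement, QuotientGroup.mk'_apply,
    QuotientGroup.eq_one_iff]
  exact Subgroup.commutator_mem_commutator ha hb

end Metabelianization

open Metabelianization
open scoped IsMulCommutative

abbrev FreeMetabelian (d : ℕ) : Type := Metabelianization (FreeGroup (Fin d))

lemma mk_mem_commutatorImage {a : FreeGroup (Fin d)} (ha : a ∈ (phiZ d).ker) :
    (a : FreeMetabelian d) ∈ commutatorImage (FreeGroup (Fin d)) :=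
  ⟨a, commutator_eq_ker_phiZ ▸ ha, rfl⟩

def latticeLift (v : Zd d) : FreeMetabelian d := Xm d v

def edgeClass (p : Zd d × Fin d) : commutatorImage (FreeGroup (Fin d)) :=
  ⟨edgeLoop p, mk_mem_commutatorImage (edgeLoop_mem_ker p)⟩

noncomputable def chainClass : C1Z d →+ Additive (commutatorImage (FreeGroup (Fin d))) :=
  Finsupp.liftAddHom fun p => zmultiplesHom _ (.ofMul (edgeClass p))

def sectionCocycle (v m : Zd d) : commutatorImage (FreeGroup (Fin d)) :=
  ⟨latticeLift v * latticeLift m * (latticeLift (v + m))⁻¹,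
    mk_mem_commutatorImage (a := Xm d v * Xm d m * (Xm d (v + m))⁻¹) (by simp [← ofAdd_add])⟩

noncomputable def sectionCocycleHom (v : Zd d) :
    C0Z d →+ Additive (commutatorImage (FreeGroup (Fin d))) :=
  Finsupp.liftAddHom fun m => zmultiplesHom _ (.ofMul (sectionCocycle v m))

@[simp]
lemma chainClass_single (p : Zd d × Fin d) :
    chainClass (Finsupp.single p 1) = .ofMul (edgeClass p) := by
  simp [chainClass]

@[simp]
lemma sectionCocycleHom_single (v m : Zd d) :
    sectionCocycleHom v (Finsupp.single m 1) = .ofMul (sectionCocycle v m) := by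
  simp [sectionCocycleHom]

lemma conj_chainClass (v : Zd d) (γ : C1Z d) :
    latticeLift v * ((chainClass γ).toMul : FreeMetabelian d) * (latticeLift v)⁻¹ =
      ((chainClass (shiftZ d v γ) - sectionCocycleHom v (bdZ d γ)).toMul : FreeMetabelian d) := by
  suffices (MulAut.conjNormal (latticeLift v)).toMonoidHom.toAdditive.comp chainClass =
      chainClass.comp (shiftZ d v) - (sectionCocycleHom v).comp (bdZ d) from
    congrArg (fun x => ((Additive.toMul x : commutatorImage _) : FreeMetabelian d))
      (DFunLike.congr_fun this γ)
  ext ⟨m, i⟩ : 2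
  have hconj : latticeLift v * edgeClass (m, i) * (latticeLift v)⁻¹ =
      sectionCocycle v m * edgeClass (v + m, i) * (sectionCocycle v (m + Pi.single i 1))⁻¹ := by
    simp only [sectionCocycle, edgeClass, latticeLift, edgeLoop, ← QuotientGroup.mk_inv,
      ← QuotientGroup.mk_mul, add_assoc]
    congr 1
    group
  simp only [AddMonoidHom.comp_apply, AddMonoidHom.sub_apply, Finsupp.singleAddHom_apply,
    shiftZ_single, bdZ_single, map_sub, chainClass_single, sectionCocycleHom_single]
  rw [sub_sub_eq_add_sub, add_comm, ← ofMul_mul, ← ofMul_div]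
  exact congrArg Additive.ofMul (Subtype.ext (by simpa [div_eq_mul_inv] using hconj))

lemma latticeLift_zero : latticeLift (0 : Zd d) = 1 := by
  simp [latticeLift]

lemma latticeLift_mul_chainClass_mul {v w : Zd d} {γ : C1Z d}
    (hγ : bdZ d γ = Finsupp.single w 1 - Finsupp.single 0 1) :
    latticeLift v * ((chainClass γ).toMul : FreeMetabelian d) * latticeLift w =
      ((chainClass (shiftZ d v γ)).toMul : FreeMetabelian d) * latticeLift (v + w) := by
  have h := conj_chainClass v γ
  simp only [hγ, map_sub, sectionCocycleHom_single, toMul_sub, toMul_ofMul, Subgroup.coe_div,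
    sectionCocycle, latticeLift_zero, add_zero, mul_one, mul_inv_cancel, div_one] at h
  calc latticeLift v * ((chainClass γ).toMul : FreeMetabelian d) * latticeLift w
      = (latticeLift v * (chainClass γ).toMul * (latticeLift v)⁻¹) *
          (latticeLift v * latticeLift w) := by
        group
    _ = _ := by
        rw [h]
        simp [div_eq_mul_inv, mul_assoc]

section FreeGroupCocycle

variable {D : FreeGroup (Fin d) → C1Z d}
  (hD1 : ∀ i : Fin d, D (FreeGroup.of i) = Finsupp.single ((0 : Zd d), i) 1)
  (hD : ∀ u v, D (u * v) = D u + shiftZ d (phiZ d u).toAdd (D v))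
include hD1 hD

lemma bdZ_cocycle (u : FreeGroup (Fin d)) :
    bdZ d (D u) = Finsupp.single (phiZ d u).toAdd 1 - Finsupp.single 0 1 := by
  induction u using FreeGroup.induction_on with
  | C1 => simp [cocycle_one hD]
  | of i => simp [hD1, bdZ_single]
  | inv_of i hi => exact bdZ_cocycle_inv hD hi
  | mul x y hx hy => exact bdZ_cocycle_mul hD hx hy

lemma cocycle_commutatorElement_of (i j : Fin d) :
    D ⁅FreeGroup.of i, FreeGroup.of j⁆ = plaq d 0 i j := by
  simp only [commutatorElement_def, hD, hD1, cocycle_inv hD, map_mul, map_inv, phiZ_of, map_neg,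
    shiftZ_single, toAdd_mul, toAdd_inv, toAdd_ofAdd, plaq]
  simp only [add_neg_cancel_comm, add_neg_cancel, add_zero, zero_add]
  abel

lemma cocycle_edgeLoop (p : Zd d × Fin d) :
    D (edgeLoop p) = Finsupp.single p 1 - standardPaths D (bdZ d (Finsupp.single p 1)) := by
  have h := shiftZ_cocycle_inv hD (Xm d (p.1 + Pi.single p.2 1))
  simp only [phiZ_Xm, toAdd_ofAdd] at h
  simp [edgeLoop, bdZ_single, hD, hD1, h]
  abel

lemma exists_cocycle_eq_of_bdZ_eq_zero {γ : C1Z d} (hγ : bdZ d γ = 0) :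
    ∃ a ∈ (phiZ d).ker, D a = γ := by
  suffices ∀ γ, .ofAdd (γ - standardPaths D (bdZ d γ)) ∈ (cocycleKerHom hD).range by
    obtain ⟨⟨a, ha⟩, h⟩ := this γ
    exact ⟨a, ha, by simpa [hγ] using h⟩
  intro γ
  induction γ using Finsupp.induction_linear with
  | zero => simp
  | add γ γ' h h' => simpa [add_sub_add_comm] using mul_mem h h'
  | single p k =>
    have hp : .ofAdd (Finsupp.single p 1 - standardPaths D (bdZ d (Finsupp.single p 1))) ∈
        (cocycleKerHom hD).range :=
      ⟨⟨edgeLoop p, edgeLoop_mem_ker p⟩, by simp [cocycle_edgeLoop hD1 hD p]⟩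
    rw [← Finsupp.smul_single_one, map_zsmul, map_zsmul, ← smul_sub, ofAdd_zsmul]
    exact zpow_mem hp k

lemma mk_eq_chainClass_mul_latticeLift (u : FreeGroup (Fin d)) :
    (u : FreeMetabelian d) = ((chainClass (D u)).toMul : FreeMetabelian d) *
      latticeLift (phiZ d u).toAdd := by
  let Ψ : FreeGroup (Fin d) →* FreeMetabelian d := MonoidHom.mk'
    (fun u => ((chainClass (D u)).toMul : FreeMetabelian d) * latticeLift (phiZ d u).toAdd)
    fun x y => by
      simp only [hD, map_add, toMul_add, Subgroup.coe_mul, map_mul, toAdd_mul, mul_assoc,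
        ← latticeLift_mul_chainClass_mul (v := (phiZ d x).toAdd) (bdZ_cocycle hD1 hD y)]
  have : QuotientGroup.mk' _ = Ψ := FreeGroup.ext_hom _ _ fun i => by
    simp [Ψ, hD1, edgeClass, edgeLoop, latticeLift]
  exact DFunLike.congr_fun this u

lemma mem_commutator_commutator_of_cocycle_eq_zero {a : FreeGroup (Fin d)}
    (ha : a ∈ (phiZ d).ker) (h0 : D a = 0) :
    a ∈ (⁅commutator (FreeGroup (Fin d)), commutator (FreeGroup (Fin d))⁆ : Subgroup _) := by
  have h := mk_eq_chainClass_mul_latticeLift hD1 hD a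
  rw [h0, MonoidHom.mem_ker.mp ha, map_zero, toAdd_one, latticeLift_zero] at h
  simpa using h

end FreeGroupCocycle

theorem metabelian_homology_general {d : ℕ}
    (D : FreeGroup (Fin d) → C1Z d)
    (hD1 : ∀ i : Fin d, D (FreeGroup.of i) = Finsupp.single ((0 : Zd d), i) 1)
    (hDmul : ∀ u v : FreeGroup (Fin d),
      D (u * v) = D u + shiftZ d (Multiplicative.toAdd (phiZ d u)) (D v)) :
    (∀ a ∈ commutator (FreeGroup (Fin d)), D a ∈ (bdZ d).ker) ∧
    (∀ a b : FreeGroup (Fin d), a ∈ commutator (FreeGroup (Fin d)) →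
      b ∈ commutator (FreeGroup (Fin d)) → D (a * b) = D a + D b) ∧
    (∀ γ : C1Z d, γ ∈ (bdZ d).ker → ∃ a ∈ commutator (FreeGroup (Fin d)), D a = γ) ∧
    (∀ a ∈ commutator (FreeGroup (Fin d)),
      (D a = 0 ↔ a ∈ (⁅commutator (FreeGroup (Fin d)), commutator (FreeGroup (Fin d))⁆ :
        Subgroup (FreeGroup (Fin d))))) ∧
    (∀ (w : FreeGroup (Fin d)), ∀ a ∈ commutator (FreeGroup (Fin d)),
      D (w * a * w⁻¹) = shiftZ d (Multiplicative.toAdd (phiZ d w)) (D a)) ∧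
    (∀ (m : Zd d) (i j : Fin d), i < j →
      D (Xm d m * ⁅FreeGroup.of i, FreeGroup.of j⁆ * (Xm d m)⁻¹) = plaq d m i j) ∧
    (∃ π : (FreeGroup (Fin d) ⧸
        (⁅commutator (FreeGroup (Fin d)), commutator (FreeGroup (Fin d))⁆ :
          Subgroup (FreeGroup (Fin d)))) →* Multiplicative (Zd d),
      (∀ w : FreeGroup (Fin d), π (QuotientGroup.mk w) = phiZ d w) ∧
      Function.Surjective π ∧
      π.ker = Subgroup.map
        (QuotientGroup.mk' (⁅commutator (FreeGroup (Fin d)), commutator (FreeGroup (Fin d))⁆ :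
          Subgroup (FreeGroup (Fin d)))) (commutator (FreeGroup (Fin d)))) := by
  have hF' := commutator_eq_ker_phiZ (d := d)
  have hle : (⁅commutator (FreeGroup (Fin d)), commutator (FreeGroup (Fin d))⁆ :
      Subgroup (FreeGroup (Fin d))) ≤ (phiZ d).ker :=
    hF' ▸ Subgroup.commutator_le_left _ _
  refine ⟨fun a ha => ?_, fun a b ha _ => ?_, fun γ hγ => ?_, fun a ha => ?_, fun w a ha => ?_,
    fun m i j _ => ?_, ⟨QuotientGroup.lift _ (phiZ d) hle, fun w => rfl,
      QuotientGroup.lift_surjective_of_surjective _ _ phiZ_surjective _, ?_⟩⟩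
  · rw [hF', MonoidHom.mem_ker] at ha
    simp [bdZ_cocycle hD1 hDmul, ha]
  · exact cocycle_mul_of_mem_ker hDmul (hF' ▸ ha) b
  · exact hF' ▸ exists_cocycle_eq_of_bdZ_eq_zero hD1 hDmul hγ
  · rw [hF'] at ha
    exact ⟨mem_commutator_commutator_of_cocycle_eq_zero hD1 hDmul ha,
      fun h => cocycle_eq_zero_of_mem_commutator_ker hDmul (hF' ▸ h)⟩
  · exact cocycle_conj hDmul w (hF' ▸ ha)
  · rw [cocycle_conj hDmul _ (by simp [commutatorElement_def]),
      cocycle_commutatorElement_of hD1 hDmul, phiZ_Xm, toAdd_ofAdd, shiftZ_plaq, add_zero]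
  · rw [QuotientGroup.ker_lift, ← hF']

/-- With `φ : F_d → ℤ^d` the abelianization, `D` induces a `ℤ^d`-equivariant isomorphism
from `F_d'/F_d''` (with the action induced by conjugation) onto `Z_1(ℤ^d) = H_1(E^d)`
sending the class of `X^m [X_i,X_j] X^{-m}` to the plaquette `p(m,i,j)`; in particular
the free metabelian group `Met(d) = F_d/F_d''` is an extension of `ℤ^d` by `H_1(E^d)`. -/
theorem metabelian_homology {d : ℕ} (hd : 1 ≤ d)
    (D : FreeGroup (Fin d) → C1Z d)
    (hD1 : ∀ i : Fin d, D (FreeGroup.of i) = Finsupp.single ((0 : Zd d), i) 1)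
    (hDmul : ∀ u v : FreeGroup (Fin d),
      D (u * v) = D u + shiftZ d (Multiplicative.toAdd (phiZ d u)) (D v)) :
    (∀ a ∈ commutator (FreeGroup (Fin d)), D a ∈ (bdZ d).ker) ∧
    (∀ a b : FreeGroup (Fin d), a ∈ commutator (FreeGroup (Fin d)) →
      b ∈ commutator (FreeGroup (Fin d)) → D (a * b) = D a + D b) ∧
    (∀ γ : C1Z d, γ ∈ (bdZ d).ker → ∃ a ∈ commutator (FreeGroup (Fin d)), D a = γ) ∧
    (∀ a ∈ commutator (FreeGroup (Fin d)),
      (D a = 0 ↔ a ∈ (⁅commutator (FreeGroup (Fin d)), commutator (FreeGroup (Fin d))⁆ :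
        Subgroup (FreeGroup (Fin d))))) ∧
    (∀ (w : FreeGroup (Fin d)), ∀ a ∈ commutator (FreeGroup (Fin d)),
      D (w * a * w⁻¹) = shiftZ d (Multiplicative.toAdd (phiZ d w)) (D a)) ∧
    (∀ (m : Zd d) (i j : Fin d), i < j →
      D (Xm d m * ⁅FreeGroup.of i, FreeGroup.of j⁆ * (Xm d m)⁻¹) = plaq d m i j) ∧
    (∃ π : (FreeGroup (Fin d) ⧸
        (⁅commutator (FreeGroup (Fin d)), commutator (FreeGroup (Fin d))⁆ :
          Subgroup (FreeGroup (Fin d)))) →* Multiplicative (Zd d),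
      (∀ w : FreeGroup (Fin d), π (QuotientGroup.mk w) = phiZ d w) ∧
      Function.Surjective π ∧
      π.ker = Subgroup.map
        (QuotientGroup.mk' (⁅commutator (FreeGroup (Fin d)), commutator (FreeGroup (Fin d))⁆ :
          Subgroup (FreeGroup (Fin d)))) (commutator (FreeGroup (Fin d)))) :=
  metabelian_homology_general D hD1 hDmul
end

section
/- For d = 2, the family of plaquettes (p(m))_{m ∈ ℤ²} is a basis of the free abelian group Z_1(ℤ²): the plaquettes are ℤ-linearly independent and generate Z_1(ℤ²) = H_1(E²). -/
/-- The lattice `ℤ²`. -/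
abbrev Z2 : Type := Fin 2 → ℤ

/-- Edge chains of the grid complex `E²` (Cayley graph of `ℤ²`):
`Finsupp.single (m, i) 1` is the edge from `m` to `m + e i`. -/
abbrev C1Z2 : Type := (Z2 × Fin 2) →₀ ℤ

/-- Vertex chains: the free abelian group on `ℤ²`. -/
abbrev C0Z2 : Type := Z2 →₀ ℤ

/-- The boundary map `∂ δ_{(m,i)} = δ_{m + e i} - δ_m` as a `ℤ`-linear map; its kernel
is the cycle group `Z_1(ℤ²) = H_1(E²)`. -/
noncomputable def bdL : C1Z2 →ₗ[ℤ] C0Z2 :=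
  Finsupp.lsum ℤ fun p =>
    LinearMap.toSpanSingleton ℤ C0Z2
      (Finsupp.single (p.1 + Pi.single p.2 1) 1 - Finsupp.single p.1 1)

/-- The plaquette `p(m) = δ_{(m,1)} + δ_{(m+e₁,2)} - δ_{(m+e₂,1)} - δ_{(m,2)}`. -/
noncomputable def plaq2 (m : Z2) : C1Z2 :=
  Finsupp.single (m, 0) 1 + Finsupp.single (m + Pi.single 0 1, 1) 1
    - Finsupp.single (m + Pi.single 1 1, 0) 1 - Finsupp.single (m, 1) 1

/-!
Write `e₂ = Pi.single 1 1`. The coefficient of the horizontal edge `(x, 0)` in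
`∑ c m • plaq2 m` is `c x - c (x - e₂)`. So if a combination vanishes, `c` is periodic in the
direction `e₂`, and a finitely supported periodic function is zero. Given a cycle `z`, take for
`c m` the sum of `z` over the horizontal edges at or below `m` in its column: it telescopes to the
right horizontal coefficients, and it has finite support because the total over a column is the
flux of `z` out of a half-plane, which vanishes. Then `z - ∑ c m • plaq2 m` is a cycle without
horizontal edges, hence periodic in `e₂`, hence zero.
-/

theorem Function.Periodic.eq_zero_of_hasFiniteSupport {G M : Type*} [AddLeftCancelMonoid G]
    [Zero M] {f : G → M} {c : G} (hf : Function.Periodic f c) (hc : ¬IsOfFinAddOrder c)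
    (hfin : f.HasFiniteSupport) : f = 0 := by
  funext x
  by_contra hx
  refine Set.infinite_range_of_injective ((add_right_injective x).comp
    (injective_nsmul_iff_not_isOfFinAddOrder.mpr hc)) (hfin.subset ?_)
  rintro _ ⟨n, rfl⟩
  simpa [Function.comp, (hf.nsmul n) x] using hx

lemma not_isOfFinAddOrder_single (i : Fin 2) : ¬IsOfFinAddOrder (Pi.single i 1 : Z2) :=
  not_isOfFinAddOrder_of_isAddTorsionFree (by simp)

lemma bdL_apply (z : C1Z2) (x : Z2) :
    bdL z x = z (x - Pi.single 0 1, 0) + z (x - Pi.single 1 1, 1) - z (x, 0) - z (x, 1) := by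
  induction z using Finsupp.induction_linear with
  | zero => simp
  | add f g hf hg => simp only [map_add, Finsupp.add_apply, hf, hg]; ring
  | single e t =>
    obtain ⟨y, i⟩ := e
    fin_cases i <;> simp [bdL, Finsupp.single_apply, Prod.ext_iff, eq_sub_iff_add_eq, mul_sub]

lemma linearCombination_plaq2_apply_zero (c : Z2 →₀ ℤ) (x : Z2) :
    Finsupp.linearCombination ℤ plaq2 c (x, 0) = c x - c (x - Pi.single 1 1) := by
  induction c using Finsupp.induction_linear with
  | zero => simp
  | add f g hf hg => simp only [map_add, Finsupp.add_apply, hf, hg]; ring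
  | single m t =>
    simp [plaq2, Finsupp.single_apply, Prod.ext_iff, eq_sub_iff_add_eq, mul_sub]

lemma bdL_plaq2 (m : Z2) : bdL (plaq2 m) = 0 := by
  simp only [plaq2, map_add, map_sub, bdL, Finsupp.lsum_single, LinearMap.toSpanSingleton_apply,
    one_smul]
  rw [add_right_comm m (Pi.single 0 1)]
  abel

lemma sum_horizontal_column_eq_zero {z : C1Z2} (hz : bdL z = 0) (a : ℤ) :
    ∑ e ∈ z.support with e.2 = 0 ∧ e.1 0 = a, z e = 0 := by
  let G : C0Z2 →ₗ[ℤ] ℤ := Finsupp.linearCombination ℤ fun w => if w 0 ≤ a then 1 else 0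
  have hflux : G (bdL z) = -∑ e ∈ z.support with e.2 = 0 ∧ e.1 0 = a, z e := by
    rw [bdL, Finsupp.lsum_apply, map_finsuppSum, Finsupp.sum, Finset.sum_filter,
      ← Finset.sum_neg_distrib]
    have hstep (b : ℤ) :
        ((if b < a then 1 else 0) - if b ≤ a then 1 else 0 : ℤ) = -if b = a then 1 else 0 := by
      split_ifs <;> omega
    refine Finset.sum_congr rfl fun ⟨y, i⟩ _ => ?_
    fin_cases i <;> simp [G, hstep]
  simpa [hz] using hflux

noncomputable def potential (z : C1Z2) (m : Z2) : ℤ :=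
  ∑ e ∈ z.support with e.2 = 0 ∧ e.1 0 = m 0 ∧ e.1 1 ≤ m 1, z e

lemma potential_sub_potential (z : C1Z2) (m : Z2) :
    potential z m - potential z (m - Pi.single 1 1) = z (m, 0) := by
  rw [potential, potential, Finset.sum_filter, Finset.sum_filter, ← Finset.sum_sub_distrib,
    ← Finsupp.sum_ite_self_eq' z (m, 0), Finsupp.sum]
  refine Finset.sum_congr rfl fun ⟨y, i⟩ _ => ?_
  simp only [Prod.ext_iff, funext_iff, Fin.forall_fin_two]
  split_ifs <;> simp_all <;> omega

lemma finite_support_potential {z : C1Z2} (hz : bdL z = 0) :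
    (Function.support (potential z)).Finite := by
  obtain ⟨L, hL⟩ := (z.support.finite_toSet.image Prod.fst).bddBelow
  obtain ⟨U, hU⟩ := (z.support.finite_toSet.image Prod.fst).bddAbove
  refine (Set.finite_Icc L U).subset fun m hm => ?_
  by_cases hUm : U 1 ≤ m 1
  · refine absurd ?_ hm
    rw [← sum_horizontal_column_eq_zero hz (m 0), potential]
    refine Finset.sum_congr (Finset.filter_congr fun e he => ?_) fun _ _ => rfl
    have heU : e.1 1 ≤ U 1 := hU ⟨e, he, rfl⟩ 1
    exact ⟨fun h => ⟨h.1, h.2.1⟩, fun h => ⟨h.1, h.2, heU.trans hUm⟩⟩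
  · obtain ⟨e, he, -⟩ := Finset.exists_ne_zero_of_sum_ne_zero hm
    obtain ⟨he, -, hem0, hem1⟩ := Finset.mem_filter.mp he
    have hLe := hL ⟨e, he, rfl⟩
    have hUe := hU ⟨e, he, rfl⟩
    simp only [Set.mem_Icc, Pi.le_def, Fin.forall_fin_two] at hLe hUe ⊢
    omega

lemma span_range_plaq2_le_ker : Submodule.span ℤ (Set.range plaq2) ≤ LinearMap.ker bdL :=
  Submodule.span_le.mpr <| Set.range_subset_iff.mpr bdL_plaq2

lemma eq_zero_of_bdL_eq_zero_of_horizontal_eq_zero {v : C1Z2} (hv : bdL v = 0)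
    (hv0 : ∀ x, v (x, 0) = 0) : v = 0 := by
  have hperiodic : Function.Periodic (fun x => v (x, 1)) (Pi.single 1 1) := fun x => by
    have h := bdL_apply v (x + Pi.single 1 1)
    simp only [hv, hv0, add_sub_cancel_right, Finsupp.coe_zero, Pi.zero_apply] at h
    change v (x + Pi.single 1 1, 1) = v (x, 1)
    omega
  have hfin : (fun x => v (x, 1)).HasFiniteSupport :=
    v.hasFiniteSupport.fun_comp_of_injective (Prod.mk_left_injective 1)
  have hv1 := hperiodic.eq_zero_of_hasFiniteSupport (not_isOfFinAddOrder_single 1) hfin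
  ext ⟨x, i⟩
  fin_cases i
  · exact hv0 x
  · exact congrFun hv1 x

lemma ker_bdL_le_span_range_plaq2 :
    LinearMap.ker bdL ≤ Submodule.span ℤ (Set.range plaq2) := by
  intro z hz
  rw [LinearMap.mem_ker] at hz
  let c : Z2 →₀ ℤ := Finsupp.ofSupportFinite (potential z) (finite_support_potential hz)
  have hc : Finsupp.linearCombination ℤ plaq2 c ∈ Submodule.span ℤ (Set.range plaq2) :=
    Finsupp.range_linearCombination (R := ℤ) (v := plaq2) ▸ LinearMap.mem_range_self _ c
  suffices z - Finsupp.linearCombination ℤ plaq2 c = 0 by rwa [sub_eq_zero.mp this]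
  refine eq_zero_of_bdL_eq_zero_of_horizontal_eq_zero ?_ fun x => ?_
  · rw [map_sub, hz, span_range_plaq2_le_ker hc, sub_zero]
  · rw [Finsupp.sub_apply, linearCombination_plaq2_apply_zero, Finsupp.ofSupportFinite_coe,
      potential_sub_potential, sub_self]

lemma linearIndependent_plaq2 : LinearIndependent ℤ plaq2 := by
  refine linearIndependent_iff.mpr fun l hl => DFunLike.coe_injective ?_
  have hperiodic : Function.Periodic l (Pi.single 1 1) := fun x => by
    have h := linearCombination_plaq2_apply_zero l (x + Pi.single 1 1)
    simp only [hl, add_sub_cancel_right, Finsupp.coe_zero, Pi.zero_apply] at h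
    omega
  exact hperiodic.eq_zero_of_hasFiniteSupport (not_isOfFinAddOrder_single 1) l.hasFiniteSupport

/-- For `d = 2` the plaquettes `(p(m))_{m ∈ ℤ²}` form a basis of the free abelian group
`Z_1(ℤ²) = H_1(E²)`: they are `ℤ`-linearly independent and they span the cycle group. -/
theorem plaquettes_basis :
    LinearIndependent ℤ plaq2 ∧
    Submodule.span ℤ (Set.range plaq2) = LinearMap.ker bdL :=
  ⟨linearIndependent_plaq2, le_antisymm span_range_plaq2_le_ker ker_bdL_le_span_range_plaq2⟩
end

section
/- Let M be the smallest normal subgroup of Met_k(2) containing z^k. Then N/M is isomorphic to the direct sum ⊕_{ℤ²} ℤ/|k|ℤ (finitely supported functions ℤ² → ℤ/|k|ℤ), and Met_k(2)/M is isomorphic to the semidirect product (⊕_{ℤ²} ℤ/|k|ℤ) ⋊ ℤ², where ℤ² acts on ⊕_{ℤ²} ℤ/|k|ℤ by translating the index; under this isomorphism the images of x and y correspond to the standard generators e_1 and e_2 of the ℤ² factor and the image of z corresponds to the generator supported at the origin. -/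
/-!
Sending `x, y` to the unit translations and `z` to the lamp at the origin respects the
relations and kills `z^k`, so it factors through `Met_k(2)/M`. Conversely, in `Met_k(2)/M`
the images of `x` and `y` commute (since `[x,y] = z^k`), so `v ↦ x^{v₁} y^{v₂}` is a
homomorphism from `ℤ²`; the conjugates `z_v` of `z` by these elements commute pairwise and
satisfy `z_v^k = 1`, so they define a homomorphism from `⊕_{ℤ²} ℤ/|k|ℤ`, equivariant for
translation. Together these give the inverse isomorphism. Finally `N` maps into the lamp
subgroup, and onto it because every `z_v` lies in `N`.
-/

/-- The free generators `x, y, z` of the presentation of `Met_k(2)`. -/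
def xg : FreeGroup (Fin 3) := FreeGroup.of 0
def yg : FreeGroup (Fin 3) := FreeGroup.of 1
def zg : FreeGroup (Fin 3) := FreeGroup.of 2

/-- The word `x^m y^n` in the free group. -/
def wmn (m n : ℤ) : FreeGroup (Fin 3) := xg ^ m * yg ^ n

open scoped commutatorElement

/-- The relators of `Met_k(2)`: `[x,y] z^{-k}` (i.e. `[x,y] = z^k`) and
`[w z w⁻¹, w' z w'⁻¹]` for all `w = x^m y^n`, `w' = x^{m'} y^{n'}` (all such conjugates
of `z` commute). -/
def metRels (k : ℤ) : Set (FreeGroup (Fin 3)) :=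
  {r | r = ⁅xg, yg⁆ * zg ^ (-k) ∨
    ∃ m n m' n' : ℤ,
      r = ⁅wmn m n * zg * (wmn m n)⁻¹, wmn m' n' * zg * (wmn m' n')⁻¹⁆}

/-- The group `Met_k(2)`, presented by generators `x, y, z` and the above relations. -/
abbrev Met2 (k : ℤ) : Type := PresentedGroup (metRels k)

/-- The generator `x` of `Met_k(2)`. -/
def X (k : ℤ) : Met2 k := PresentedGroup.of 0
/-- The generator `y` of `Met_k(2)`. -/
def Y (k : ℤ) : Met2 k := PresentedGroup.of 1
/-- The generator `z` of `Met_k(2)`. -/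
def Z (k : ℤ) : Met2 k := PresentedGroup.of 2

/-- `N`: the smallest normal subgroup of `Met_k(2)` containing `z`. -/
def Nsub (k : ℤ) : Subgroup (Met2 k) := Subgroup.normalClosure {Z k}

instance (k : ℤ) : (Nsub k).Normal := Subgroup.normalClosure_normal

/-- `⊕_{ℤ²} ℤ/|k|ℤ`: finitely supported functions `ℤ² → ℤ/|k|ℤ` (with `ℤ/0ℤ = ℤ`). -/
abbrev Wk (k : ℤ) : Type := (Fin 2 → ℤ) →₀ ZMod k.natAbs

/-- Translation of the index by `v ∈ ℤ²`. -/
noncomputable def translW (k : ℤ) (v : Fin 2 → ℤ) : Wk k ≃+ Wk k :=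
  Finsupp.domCongr (Equiv.addLeft v)

/-- The action of `ℤ²` on `⊕_{ℤ²} ℤ/|k|ℤ` by translations of the index. -/
noncomputable def actW (k : ℤ) :
    Multiplicative (Fin 2 → ℤ) →* MulAut (Multiplicative (Wk k)) :=
  MonoidHom.mk' (fun v => AddEquiv.toMultiplicative (translW k v.toAdd))
    (by
      intro a b
      ext w
      simp [translW, Finsupp.domCongr_apply, Equiv.Perm.mul_def,
        Finsupp.equivMapDomain_trans])

/-- `M`: the smallest normal subgroup of `Met_k(2)` containing `z^k`. -/
def Msub (k : ℤ) : Subgroup (Met2 k) := Subgroup.normalClosure {Z k ^ k}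

instance (k : ℤ) : (Msub k).Normal := Subgroup.normalClosure_normal

open Multiplicative SemidirectProduct

section General

variable {ι : Type*}

lemma ofAdd_single_intCast {R : Type*} [Ring R] (i : ι) (j : ℤ) :
    ofAdd (Finsupp.single i (j : R)) = ofAdd (Finsupp.single i (1 : R)) ^ j := by
  rw [← ofAdd_zsmul, Finsupp.smul_single, zsmul_one]

variable {n : ℕ}

lemma finsuppZMod_monoidHom_ext {G : Type*} [Group G] {f g : Multiplicative (ι →₀ ZMod n) →* G}
    (h : ∀ i, f (ofAdd (Finsupp.single i 1)) = g (ofAdd (Finsupp.single i 1))) : f = g := by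
  ext i c
  obtain ⟨j, rfl⟩ := ZMod.intCast_surjective c
  simpa [ofAdd_single_intCast] using congrArg (· ^ j) (h i)

lemma finsuppZMod_subgroup_eq_top {H : Subgroup (Multiplicative (ι →₀ ZMod n))}
    (h : ∀ i, ofAdd (Finsupp.single i 1) ∈ H) : H = ⊤ := by
  suffices ∀ w : ι →₀ ZMod n, ofAdd w ∈ H from eq_top_iff.2 fun w _ => this w.toAdd
  intro w
  induction w using Finsupp.induction_linear with
  | zero => exact H.one_mem
  | add v w hv hw => exact H.mul_mem hv hw
  | single i c =>
    obtain ⟨j, rfl⟩ := ZMod.intCast_surjective c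
    rw [ofAdd_single_intCast]
    exact H.zpow_mem (h i) j

open scoped IsMulCommutative in
noncomputable def finsuppZModLift {G : Type*} [Group G] (g : ι → G)
    (hcomm : ∀ i j, Commute (g i) (g j)) (hpow : ∀ i, g i ^ n = 1) :
    Multiplicative (ι →₀ ZMod n) →* G :=
  have : IsMulCommutative (Subgroup.closure (Set.range g)) :=
    Subgroup.isMulCommutative_closure <| by
      rintro _ ⟨i, rfl⟩ _ ⟨j, rfl⟩
      exact hcomm i j
  let gen (i : ι) : Subgroup.closure (Set.range g) := ⟨g i, Subgroup.subset_closure ⟨i, rfl⟩⟩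
  (Subgroup.closure (Set.range g)).subtype.comp <| AddMonoidHom.toMultiplicativeLeft <|
    Finsupp.liftAddHom fun i => ZMod.lift n
      ⟨zmultiplesHom _ (Additive.ofMul (gen i)), by
        simpa [← ofMul_zpow] using congrArg Additive.ofMul (Subtype.ext (hpow i) : gen i ^ n = 1)⟩

lemma finsuppZModLift_ofAdd_single_one {G : Type*} [Group G] (g : ι → G)
    (hcomm : ∀ i j, Commute (g i) (g j)) (hpow : ∀ i, g i ^ n = 1) (i : ι) :
    finsuppZModLift g hcomm hpow (ofAdd (Finsupp.single i 1)) = g i := by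
  rw [← Int.cast_one (R := ZMod n)]
  simp [finsuppZModLift, -Int.cast_one]

lemma ofAdd_fin_two (v : Fin 2 → ℤ) :
    ofAdd v = ofAdd (Pi.single 0 1) ^ v 0 * ofAdd (Pi.single 1 1) ^ v 1 := by
  rw [← ofAdd_zsmul, ← ofAdd_zsmul, ← ofAdd_add]
  congr 1
  ext i
  fin_cases i <;> simp

def zpowPairHom {G : Type*} [Group G] {a b : G} (h : Commute a b) :
    Multiplicative (Fin 2 → ℤ) →* G where
  toFun v := a ^ v.toAdd 0 * b ^ v.toAdd 1
  map_one' := by simp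
  map_mul' v w := by
    simp only [toAdd_mul, Pi.add_apply, zpow_add]
    exact (h.zpow_zpow _ _).mul_mul_mul_comm _ _

end General

namespace SemidirectProduct

variable {N G : Type*} [Group G]

lemma normal_range_inl [Group N] {φ : G →* MulAut N} : (inl : N →* N ⋊[φ] G).range.Normal := by
  rw [range_inl_eq_ker_rightHom]
  infer_instance

lemma commute_of_mem_range_inl [CommGroup N] {φ : G →* MulAut N} {a b : N ⋊[φ] G}
    (ha : a ∈ (inl : N →* N ⋊[φ] G).range) (hb : b ∈ (inl : N →* N ⋊[φ] G).range) :
    Commute a b := by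
  obtain ⟨a, rfl⟩ := ha
  obtain ⟨b, rfl⟩ := hb
  exact (Commute.all a b).map inl

end SemidirectProduct

abbrev WreathZ2 (k : ℤ) : Type :=
  SemidirectProduct (Multiplicative (Wk k)) (Multiplicative (Fin 2 → ℤ)) (actW k)

namespace WreathZ2

variable (k : ℤ)

noncomputable def lamp (u : Fin 2 → ℤ) : WreathZ2 k :=
  inl (ofAdd (Finsupp.single u 1))

lemma actW_ofAdd_single (v : Multiplicative (Fin 2 → ℤ)) (u : Fin 2 → ℤ) (c : ZMod k.natAbs) :
    actW k v (ofAdd (Finsupp.single u c)) = ofAdd (Finsupp.single (v.toAdd + u) c) := by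
  simp [actW, translW]

lemma inr_mul_lamp_mul_inr_inv (v u : Fin 2 → ℤ) :
    inr (ofAdd v) * lamp k u * (inr (ofAdd v))⁻¹ = lamp k (v + u) := by
  rw [lamp, ← map_inv, ← inl_aut, actW_ofAdd_single, toAdd_ofAdd, lamp]

lemma lamp_zpow_self (u : Fin 2 → ℤ) : lamp k u ^ k = 1 := by
  rw [lamp, ← map_zpow, ← ofAdd_single_intCast]
  have hk : ((k : ℤ) : ZMod k.natAbs) = 0 := by
    rw [ZMod.intCast_zmod_eq_zero_iff_dvd, Int.natCast_natAbs, abs_dvd]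
  simp [hk]

end WreathZ2

namespace Met2

variable (k : ℤ)

lemma commutator_X_Y : ⁅X k, Y k⁆ = Z k ^ k := by
  have h := PresentedGroup.one_of_mem (rels := metRels k) (Or.inl rfl)
  rwa [map_mul, map_commutatorElement, map_zpow, zpow_neg, mul_inv_eq_one] at h

lemma commute_conj_Z (m n m' n' : ℤ) :
    Commute (X k ^ m * Y k ^ n * Z k * (X k ^ m * Y k ^ n)⁻¹)
      (X k ^ m' * Y k ^ n' * Z k * (X k ^ m' * Y k ^ n')⁻¹) := by
  have h := PresentedGroup.one_of_mem (rels := metRels k) (Or.inr ⟨m, n, m', n', rfl⟩)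
  simp only [map_commutatorElement, map_mul, map_inv, map_zpow, wmn] at h
  exact commutatorElement_eq_one_iff_commute.1 h

noncomputable def wreathGens : Fin 3 → WreathZ2 k :=
  ![inr (ofAdd (Pi.single 0 1)), inr (ofAdd (Pi.single 1 1)), WreathZ2.lamp k 0]

lemma lift_wreathGens_eq_one : ∀ r ∈ metRels k, FreeGroup.lift (wreathGens k) r = 1 := by
  have hx : FreeGroup.lift (wreathGens k) xg = inr (ofAdd (Pi.single 0 1)) := by
    simp [xg, wreathGens]
  have hy : FreeGroup.lift (wreathGens k) yg = inr (ofAdd (Pi.single 1 1)) := by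
    simp [yg, wreathGens]
  have hz : FreeGroup.lift (wreathGens k) zg = WreathZ2.lamp k 0 := by
    simp [zg, wreathGens]
  rintro r (rfl | ⟨m, n, m', n', rfl⟩)
  · rw [map_mul, map_commutatorElement, map_zpow, hx, hy, hz, commutatorElement_eq_one_iff_commute.2
      ((Commute.all _ _).map inr), one_mul, zpow_neg, WreathZ2.lamp_zpow_self, inv_one]
  · have hconj (w : FreeGroup (Fin 3)) :
        FreeGroup.lift (wreathGens k) (w * zg * w⁻¹) ∈ (inl : _ →* WreathZ2 k).range := by
      rw [map_mul, map_mul, map_inv, hz]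
      exact normal_range_inl.conj_mem _ ⟨_, rfl⟩ _
    rw [map_commutatorElement, commutatorElement_eq_one_iff_commute]
    exact commute_of_mem_range_inl (hconj _) (hconj _)

noncomputable def toWreath : Met2 k →* WreathZ2 k :=
  PresentedGroup.toGroup (lift_wreathGens_eq_one k)

@[simp] lemma toWreath_X : toWreath k (X k) = inr (ofAdd (Pi.single 0 1)) :=
  PresentedGroup.toGroup.of _
@[simp] lemma toWreath_Y : toWreath k (Y k) = inr (ofAdd (Pi.single 1 1)) :=
  PresentedGroup.toGroup.of _
@[simp] lemma toWreath_Z : toWreath k (Z k) = WreathZ2.lamp k 0 :=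
  PresentedGroup.toGroup.of _

lemma Msub_le_ker_toWreath : Msub k ≤ (toWreath k).ker := by
  refine Subgroup.normalClosure_le_normal ?_
  rintro _ rfl
  simp [WreathZ2.lamp_zpow_self]

lemma mk_Z_zpow_self : ((Z k ^ k : Met2 k) : Met2 k ⧸ Msub k) = 1 :=
  (QuotientGroup.eq_one_iff _).2 (Subgroup.subset_normalClosure rfl)

lemma commute_mk_X_mk_Y : Commute (X k : Met2 k ⧸ Msub k) (Y k) := by
  rw [← commutatorElement_eq_one_iff_commute]
  exact (map_commutatorElement (QuotientGroup.mk' (Msub k)) _ _).symm.trans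
    (by rw [commutator_X_Y]; exact mk_Z_zpow_self k)

noncomputable def quotShift : Multiplicative (Fin 2 → ℤ) →* Met2 k ⧸ Msub k :=
  zpowPairHom (commute_mk_X_mk_Y k)

lemma quotShift_ofAdd (u : Fin 2 → ℤ) :
    quotShift k (ofAdd u) = ((X k ^ u 0 * Y k ^ u 1 : Met2 k) : Met2 k ⧸ Msub k) := by
  simp [quotShift, zpowPairHom]

noncomputable def quotLamp (u : Fin 2 → ℤ) : Met2 k ⧸ Msub k :=
  quotShift k (ofAdd u) * Z k * (quotShift k (ofAdd u))⁻¹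

lemma commute_quotLamp (u u' : Fin 2 → ℤ) : Commute (quotLamp k u) (quotLamp k u') := by
  simpa [quotLamp, quotShift_ofAdd] using
    (commute_conj_Z k (u 0) (u 1) (u' 0) (u' 1)).map (QuotientGroup.mk' (Msub k))

lemma quotLamp_pow_natAbs (u : Fin 2 → ℤ) : quotLamp k u ^ k.natAbs = 1 := by
  rw [pow_natAbs_eq_one, quotLamp, conj_zpow, ← QuotientGroup.mk_zpow, mk_Z_zpow_self, mul_one,
    mul_inv_cancel]

lemma quotShift_mul_quotLamp_mul_inv (v u : Fin 2 → ℤ) :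
    quotShift k (ofAdd v) * quotLamp k u * (quotShift k (ofAdd v))⁻¹ = quotLamp k (v + u) := by
  simp only [quotLamp, ofAdd_add, map_mul]
  group

noncomputable def fromWreath : WreathZ2 k →* Met2 k ⧸ Msub k :=
  SemidirectProduct.lift
    (finsuppZModLift (quotLamp k) (commute_quotLamp k) (quotLamp_pow_natAbs k)) (quotShift k)
    fun v => finsuppZMod_monoidHom_ext fun u => by
      simp [WreathZ2.actW_ofAdd_single, finsuppZModLift_ofAdd_single_one,
        ← quotShift_mul_quotLamp_mul_inv]

noncomputable def quotientToWreath : Met2 k ⧸ Msub k →* WreathZ2 k :=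
  QuotientGroup.lift (Msub k) (toWreath k) (Msub_le_ker_toWreath k)

@[simp] lemma quotientToWreath_mk (g : Met2 k) : quotientToWreath k g = toWreath k g := rfl

lemma quotientToWreath_quotShift (v : Multiplicative (Fin 2 → ℤ)) :
    quotientToWreath k (quotShift k v) = inr v := by
  rw [← ofAdd_toAdd v, quotShift_ofAdd, ofAdd_fin_two, map_mul, map_zpow, map_zpow]
  simp

lemma fromWreath_comp_quotientToWreath :
    (fromWreath k).comp (quotientToWreath k) = MonoidHom.id _ := by
  refine QuotientGroup.monoidHom_ext _ (PresentedGroup.ext fun i => ?_)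
  fin_cases i
  · show fromWreath k (toWreath k (X k)) = X k
    simp [fromWreath, quotShift_ofAdd]
  · show fromWreath k (toWreath k (Y k)) = Y k
    simp [fromWreath, quotShift_ofAdd]
  · show fromWreath k (toWreath k (Z k)) = Z k
    simp [fromWreath, WreathZ2.lamp, finsuppZModLift_ofAdd_single_one, quotLamp]

lemma quotientToWreath_quotLamp (u : Fin 2 → ℤ) :
    quotientToWreath k (quotLamp k u) = WreathZ2.lamp k u := by
  rw [quotLamp, map_mul, map_mul, map_inv, quotientToWreath_quotShift, quotientToWreath_mk,
    toWreath_Z, WreathZ2.inr_mul_lamp_mul_inr_inv, add_zero]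

lemma quotientToWreath_comp_fromWreath :
    (quotientToWreath k).comp (fromWreath k) = MonoidHom.id _ := by
  refine SemidirectProduct.hom_ext (finsuppZMod_monoidHom_ext fun u => ?_)
    (MonoidHom.ext fun v => by simpa [fromWreath] using quotientToWreath_quotShift k v)
  simpa [fromWreath, finsuppZModLift_ofAdd_single_one, WreathZ2.lamp] using
    quotientToWreath_quotLamp k u

noncomputable def quotientMulEquivWreath : Met2 k ⧸ Msub k ≃* WreathZ2 k :=
  (quotientToWreath k).toMulEquiv (fromWreath k) (fromWreath_comp_quotientToWreath k)
    (quotientToWreath_comp_fromWreath k)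

lemma ker_toWreath : (toWreath k).ker = Msub k := by
  have h : toWreath k = (quotientToWreath k).comp (QuotientGroup.mk' (Msub k)) := rfl
  rw [h, MonoidHom.ker_comp_of_injective _ _ (quotientMulEquivWreath k).injective,
    QuotientGroup.ker_mk']

lemma toWreath_surjective : Function.Surjective (toWreath k) :=
  (quotientMulEquivWreath k).surjective.comp (QuotientGroup.mk'_surjective _)

lemma Nsub_le_comap_range_inl : Nsub k ≤ (inl : _ →* WreathZ2 k).range.comap (toWreath k) :=
  have := normal_range_inl (N := Multiplicative (Wk k)) (φ := actW k)
  Subgroup.normalClosure_le_normal <| by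
    rintro _ rfl
    exact ⟨_, (toWreath_Z k).symm⟩

noncomputable def nToLamps : Nsub k →* Multiplicative (Wk k) :=
  (MonoidHom.ofInjective (f := (inl : Multiplicative (Wk k) →* WreathZ2 k))
      inl_injective).symm.toMonoidHom.comp <|
    ((toWreath k).comp (Nsub k).subtype).codRestrict _ fun g => Nsub_le_comap_range_inl k g.2

lemma ker_nToLamps : (nToLamps k).ker = (Msub k).subgroupOf (Nsub k) :=
  (MonoidHom.ker_comp_of_injective _ _ (MulEquiv.injective _)).trans <|
    (MonoidHom.ker_codRestrict _ _ _).trans <| by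
      rw [← MonoidHom.comap_ker, ker_toWreath]
      rfl

lemma inl_nToLamps (g : Nsub k) : inl (nToLamps k g) = toWreath k g :=
  (MonoidHom.ofInjective_apply inl_injective).symm.trans
    (congrArg Subtype.val (MulEquiv.apply_symm_apply _ _))

lemma nToLamps_surjective : Function.Surjective (nToLamps k) := by
  refine MonoidHom.range_eq_top.1 (finsuppZMod_subgroup_eq_top fun u => ?_)
  have hmem : X k ^ u 0 * Y k ^ u 1 * Z k * (X k ^ u 0 * Y k ^ u 1)⁻¹ ∈ Nsub k :=
    (inferInstance : (Nsub k).Normal).conj_mem _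
      (Subgroup.subset_normalClosure (Set.mem_singleton _)) _
  have hw : ((X k ^ u 0 * Y k ^ u 1 * Z k * (X k ^ u 0 * Y k ^ u 1)⁻¹ : Met2 k) :
      Met2 k ⧸ Msub k) = quotLamp k u := by
    simp [quotLamp, quotShift_ofAdd]
  refine ⟨⟨_, hmem⟩, inl_injective (φ := actW k) ?_⟩
  rw [inl_nToLamps, ← quotientToWreath_mk, hw, quotientToWreath_quotLamp]
  rfl

end Met2

/-- The isomorphisms of quotients are expressed by surjective homomorphisms with the
corresponding kernels. -/
theorem quotients_by_M (k : ℤ) :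
    (∃ f : (Nsub k) →* Multiplicative (Wk k),
      Function.Surjective f ∧ f.ker = (Msub k).subgroupOf (Nsub k)) ∧
    ∃ θ : Met2 k →*
        SemidirectProduct (Multiplicative (Wk k)) (Multiplicative (Fin 2 → ℤ)) (actW k),
      Function.Surjective θ ∧ θ.ker = Msub k ∧
      θ (X k) = SemidirectProduct.inr (Multiplicative.ofAdd (Pi.single 0 1)) ∧
      θ (Y k) = SemidirectProduct.inr (Multiplicative.ofAdd (Pi.single 1 1)) ∧
      θ (Z k) = SemidirectProduct.inl
        (Multiplicative.ofAdd (Finsupp.single (0 : Fin 2 → ℤ) (1 : ZMod k.natAbs))) :=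
  ⟨⟨Met2.nToLamps k, Met2.nToLamps_surjective k, Met2.ker_nToLamps k⟩,
    Met2.toWreath k, Met2.toWreath_surjective k, Met2.ker_toWreath k, Met2.toWreath_X k,
    Met2.toWreath_Y k, Met2.toWreath_Z k⟩
end
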